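/- arXiv:1903.02991 — 4 statements merged into one kernel-verified Lean document; each statement's English description precedes it below -/
import Mathlib

section
/- Let L and K be small categories with finite products. For a finite-product-preserving functor f : L ⥤ K, precomposition with f sends models of K to models of L, giving a functor f* : Mdl(K) ⥤ Mdl(L); and the resulting functor Fun^×(L, K) ⥤ Fun(Mdl(K), Mdl(L)), f ↦ f*, is fully faithful: for finite-product-preserving f, g : L ⥤ K, the canonical map from natural transformations f → g to natural transformations f* → g* is a bijection. -/
/-! Representable functors `Hom(k, -)` preserve all limits, so they are models of `K`. By the
Yoneda lemma, evaluation at `k` on `Mdl K` is corepresented by the model `Hom(k, -)`, hence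
`k ↦ (F ↦ F k)` is a fully faithful functor `K ⥤ (Mdl K ⥤ Type u)`. Transposing, a natural
transformation `f* ⟶ g*` is a natural transformation `f ⋙ ev ⟶ g ⋙ ev` of functors
`L ⥤ (Mdl K ⥤ Type u)`, and by full faithfulness these come from unique `f ⟶ g`. -/

open CategoryTheory CategoryTheory.Limits

universe u

/-- The category of models of `L`: the full subcategory of `Fun(L, Type u)` spanned by the
finite-product-preserving functors. -/
abbrev Mdl (L : Type u) [SmallCategory L] : Type (u + 1) :=
  ObjectProperty.FullSubcategory (fun F : L ⥤ Type u => PreservesFiniteProducts F)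

variable {L K : Type u} [SmallCategory L] [SmallCategory K]

/-- Precomposition with a finite-product-preserving functor `f : L ⥤ K` sends models of `K`
to models of `L`, giving a functor `f* : Mdl K ⥤ Mdl L`. -/
def preMdl (f : L ⥤ K) [PreservesFiniteProducts f] : Mdl K ⥤ Mdl L :=
  ObjectProperty.lift _
    (ObjectProperty.ι _ ⋙ (Functor.whiskeringLeft L K (Type u)).obj f)
    (fun F => by
      have : PreservesFiniteProducts F.obj := F.property
      dsimp
      infer_instance)

/-- The canonical map from natural transformations `f ⟶ g` to natural transformations
`f* ⟶ g*`, given objectwise by whiskering. -/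
def preMdlMap {f g : L ⥤ K} [PreservesFiniteProducts f] [PreservesFiniteProducts g]
    (α : f ⟶ g) : preMdl f ⟶ preMdl g where
  app F := ObjectProperty.homMk (Functor.whiskerRight α F.obj)
  naturality _ _ φ := ObjectProperty.hom_ext _
    (((Functor.whiskeringLeft L K (Type u)).map α).naturality φ.hom)

open Opposite

namespace CategoryTheory.ObjectProperty

variable (P : ObjectProperty (K ⥤ Type u))

def restrictedEvaluation : K ⥤ P.FullSubcategory ⥤ Type u :=
  evaluation K (Type u) ⋙ (Functor.whiskeringLeft _ _ _).obj P.ι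

variable {P} (hP : ∀ k : K, P (coyoneda.obj (op k)))

def coyonedaLift : Kᵒᵖ ⥤ P.FullSubcategory :=
  P.lift coyoneda fun k => hP k.unop

def coyonedaLiftFullyFaithful : (coyonedaLift hP).FullyFaithful :=
  Functor.FullyFaithful.ofCompFaithful (G := P.ι) Coyoneda.fullyFaithful

def coyonedaLiftRightOpCompCoyonedaIso :
    (coyonedaLift hP).rightOp ⋙ coyoneda ≅ P.restrictedEvaluation :=
  NatIso.ofComponents
    (fun _ => NatIso.ofComponents
      (fun _ => Equiv.toIso (InducedCategory.homEquiv.trans coyonedaEquiv))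
      fun φ => by ext x; exact coyonedaEquiv_comp x.hom φ.hom)
    fun u => by ext F x; exact (coyonedaEquiv_naturality x.hom u).symm

def restrictedEvaluationFullyFaithful : P.restrictedEvaluation.FullyFaithful :=
  ((coyonedaLiftFullyFaithful hP).rightOp.comp Coyoneda.fullyFaithful).ofIso
    (coyonedaLiftRightOpCompCoyonedaIso hP)

end CategoryTheory.ObjectProperty

abbrev Mdl.evaluation : K ⥤ Mdl K ⥤ Type u :=
  ObjectProperty.restrictedEvaluation _

def Mdl.evaluationFullyFaithful : (Mdl.evaluation (K := K)).FullyFaithful :=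
  ObjectProperty.restrictedEvaluationFullyFaithful fun _ => inferInstance

def preMdlTranspose {f g : L ⥤ K} [PreservesFiniteProducts f] [PreservesFiniteProducts g]
    (Φ : preMdl f ⟶ preMdl g) : f ⋙ Mdl.evaluation ⟶ g ⋙ Mdl.evaluation :=
  (flipFunctor _ _ _).map (Functor.whiskerRight Φ (ObjectProperty.ι _))

theorem preMdlTranspose_injective {f g : L ⥤ K} [PreservesFiniteProducts f]
    [PreservesFiniteProducts g] : Function.Injective (preMdlTranspose (f := f) (g := g)) := by
  intro Φ Ψ h
  ext F l x
  exact congr_fun (congr_arg (fun η => ((η.app l).app F : _ → _)) h) x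

theorem preMdlTranspose_preMdlMap {f g : L ⥤ K} [PreservesFiniteProducts f]
    [PreservesFiniteProducts g] (α : f ⟶ g) :
    preMdlTranspose (preMdlMap α) = ((Functor.whiskeringRight L K _).obj Mdl.evaluation).map α :=
  rfl

/-- The assignment `f ↦ f*` is fully faithful: for finite-product-preserving functors
`f, g : L ⥤ K`, the canonical map from natural transformations `f ⟶ g` to natural
transformations `f* ⟶ g*` is a bijection. -/
theorem preMdl_fullyFaithful (f g : L ⥤ K)
    [PreservesFiniteProducts f] [PreservesFiniteProducts g] :
    Function.Bijective (preMdlMap : (f ⟶ g) → (preMdl f ⟶ preMdl g)) := by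
  have hcomp : preMdlTranspose ∘ preMdlMap =
      ((Functor.whiskeringRight L K _).obj Mdl.evaluation).map (X := f) (Y := g) :=
    funext preMdlTranspose_preMdlMap
  refine Function.Bijective.of_comp_left ?_ preMdlTranspose_injective
  rw [hcomp]
  exact (Mdl.evaluationFullyFaithful.whiskeringRight L).map_bijective f g
end

section
/- Let R be a ring and let F denote the full subcategory of ModuleCat R spanned by the finitely generated free modules Fin n → R (for n : ℕ). Then the restricted Yoneda functor ModuleCat R ⥤ Fun(Fᵒᵖ, Type), sending a module M to the functor N ↦ (R-linear maps N → M), is fully faithful, and its essential image consists exactly of the functors Fᵒᵖ ⥤ Type that preserve finite products (equivalently, that send finite direct sums in F to products of sets). In particular ModuleCat R is equivalent to the category of models of the Lawvere theory Fᵒᵖ. -/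
open CategoryTheory CategoryTheory.Limits Opposite

universe u

variable (R : Type u) [Ring R]

/-- Finitely generated free `R`-modules: those isomorphic to `Fin n → R` for some `n`. -/
def IsFGFree (M : ModuleCat.{u} R) : Prop :=
  ∃ n : ℕ, Nonempty (M ≅ ModuleCat.of R (Fin n → R))

/-- The full subcategory of `ModuleCat R` spanned by the finitely generated free modules. -/
abbrev FGFree : Type (u + 1) := ObjectProperty.FullSubcategory (IsFGFree R)

/-- The restricted Yoneda functor, sending an `R`-module `M` to the functor
`N ↦ (R-linear maps N → M)` on the opposite of the category of finitely generated free
modules. -/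
def restrictedYoneda : ModuleCat.{u} R ⥤ ((FGFree R)ᵒᵖ ⥤ Type u) :=
  yoneda ⋙ (Functor.whiskeringLeft (FGFree R)ᵒᵖ (ModuleCat.{u} R)ᵒᵖ (Type u)).obj
    (ObjectProperty.ι (IsFGFree R)).op

/-!
A finite-product-preserving `G : Fᵒᵖ ⥤ Type` is determined by the set `G(R)`: the coproduct
inclusions `single i : R ⟶ Rⁿ` identify `G(Rⁿ)` with `G(R)ⁿ`. A morphism `g : R ⟶ N` turns
`x : G(N)` into the generalized element `el x g = G(g) x : G(R)`, and the module structure of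
`G(R)` is read off from the morphisms out of `R`: `a + b` is the pair `(a, b) : G(R²)` evaluated
at `single 0 + single 1`, `-a = el a (-𝟙)`, and `r • a` is `a` evaluated at right multiplication
by `r`. Each `el x` carries the group structure of `Hom(R, N)` to this one, and finitely many
elements of `G(R)` are always generalized elements of a single `x : G(Rⁿ)`, so the module axioms
are inherited from `Hom(R, Rⁿ)`. Then `x ↦ (v ↦ el x (toSpan v))` is an isomorphism
`G ≅ Hom(-, G(R))`, since on `Rⁿ` both sides are `G(R)ⁿ`.

Conversely `Hom(-, M)` preserves finite products because `F` is closed under finite direct sums,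
and a natural transformation `Hom(-, M) ⟶ Hom(-, M')` is induced by its value on `R`, whose
additivity comes from naturality along a morphism `R² ⟶ M`.
-/

section

variable {R}

noncomputable def ModuleCat.isColimitPiCofan {J : Type} [Fintype J] [DecidableEq J]
    (M : J → ModuleCat.{u} R) :
    IsColimit (Cofan.mk (ModuleCat.of R (∀ j, M j))
      fun j => ModuleCat.ofHom (LinearMap.single R (fun j => M j) j)) :=
  Cofan.IsColimit.mk _
    (fun t => ModuleCat.ofHom (LinearMap.lsum R (fun j => M j) ℕ fun j => (t.inj j).hom))
    (fun t j => by ext x; exact LinearMap.lsum_piSingle ..)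
    (fun t m hm => by
      ext1
      refine LinearMap.pi_ext fun j x => ?_
      rw [ModuleCat.hom_ofHom, LinearMap.lsum_piSingle]
      exact congr($(hm j).hom x))

noncomputable def ModuleCat.toSpan {M : ModuleCat.{u} R} (m : M) : ModuleCat.of R R ⟶ M :=
  ModuleCat.ofHom (LinearMap.toSpanSingleton R M m)

theorem ModuleCat.toSpan_comp {M M' : ModuleCat.{u} R} (m : M) (f : M ⟶ M') :
    toSpan m ≫ f = toSpan (f m) := by
  ext
  exact map_smul f.hom (1 : R) m

theorem isFGFree_iff (M : ModuleCat.{u} R) :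
    IsFGFree R M ↔ Module.Free R M ∧ Module.Finite R M := by
  constructor
  · rintro ⟨n, ⟨e⟩⟩
    exact ⟨.of_equiv e.toLinearEquiv.symm, .equiv e.toLinearEquiv.symm⟩
  · rintro ⟨_, _⟩
    exact ⟨_, ⟨((Module.Free.chooseBasis R M).reindex (Fintype.equivFin _)).equivFun.toModuleIso⟩⟩

theorem isFGFree_pi {J : Type} [Finite J] (M : J → ModuleCat.{u} R)
    (hM : ∀ j, IsFGFree R (M j)) : IsFGFree R (ModuleCat.of R (∀ j, M j)) := by
  have := fun j => ((isFGFree_iff (M j)).1 (hM j)).1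
  have := fun j => ((isFGFree_iff (M j)).1 (hM j)).2
  exact (isFGFree_iff _).2
    ⟨inferInstanceAs (Module.Free R (∀ j, M j)), inferInstanceAs (Module.Finite R (∀ j, M j))⟩

namespace FGFree

noncomputable def piCofan {J : Type} [Fintype J] [DecidableEq J] (N : J → FGFree R) : Cofan N :=
  Cofan.mk ⟨ModuleCat.of R (∀ j, (N j).obj), isFGFree_pi _ fun j => (N j).property⟩
    fun j => ObjectProperty.homMk (ModuleCat.ofHom (LinearMap.single R (fun j => (N j).obj) j))

noncomputable def isColimitMapCoconePiCofan {J : Type} [Fintype J] [DecidableEq J]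
    (N : J → FGFree R) : IsColimit ((ObjectProperty.ι (IsFGFree R)).mapCocone (piCofan N)) :=
  (isColimitMapCoconeCofanMkEquiv (ObjectProperty.ι (IsFGFree R)) N _).symm
    (ModuleCat.isColimitPiCofan fun j => (N j).obj)

noncomputable def isColimitPiCofan {J : Type} [Fintype J] [DecidableEq J] (N : J → FGFree R) :
    IsColimit (piCofan N) :=
  isColimitOfReflects _ (isColimitMapCoconePiCofan N)

instance : PreservesFiniteCoproducts (ObjectProperty.ι (IsFGFree R)) where
  preserves _ := ⟨fun {K} =>
    have := preservesColimit_of_preserves_colimit_cocone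
      (isColimitPiCofan fun j => K.obj ⟨j⟩) (isColimitMapCoconePiCofan _)
    preservesColimit_of_iso_diagram _ (Discrete.natIsoFunctor (F := K)).symm⟩

variable (R) in
abbrev one : FGFree R := ⟨ModuleCat.of R R, (isFGFree_iff _).2 ⟨inferInstance, inferInstance⟩⟩

variable (R) in
noncomputable abbrev pow (n : ℕ) : FGFree R := (piCofan fun _ : Fin n => one R).pt

noncomputable def single {n : ℕ} (i : Fin n) : one R ⟶ pow R n :=
  (piCofan fun _ : Fin n => one R).inj i

noncomputable def desc {n : ℕ} {N : FGFree R} (g : Fin n → (one R ⟶ N)) : pow R n ⟶ N :=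
  Cofan.IsColimit.desc (isColimitPiCofan _) g

theorem single_desc {n : ℕ} {N : FGFree R} (g : Fin n → (one R ⟶ N)) (i : Fin n) :
    single i ≫ desc g = g i :=
  Cofan.IsColimit.fac _ _ _

noncomputable def toSpan {N : FGFree R} (v : N.obj) : one R ⟶ N :=
  ObjectProperty.homMk (ModuleCat.toSpan v)

theorem toSpan_comp {N N' : FGFree R} (v : N.obj) (f : N ⟶ N') :
    toSpan v ≫ f = toSpan (f.hom v) :=
  ObjectProperty.hom_ext _ (ModuleCat.toSpan_comp v f.hom)

theorem toSpan_add {N : FGFree R} (v w : N.obj) : toSpan (v + w) = toSpan v + toSpan w := by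
  ext
  exact (one_smul R (v + w)).trans (congrArg₂ (· + ·) (one_smul R v) (one_smul R w)).symm

theorem toSpan_zero {N : FGFree R} : toSpan (0 : N.obj) = 0 := by
  ext
  exact smul_zero (1 : R)

theorem toSpan_one : toSpan (1 : R) = 𝟙 (one R) := by
  ext
  exact mul_one (1 : R)

theorem toSpan_single {n : ℕ} (i : Fin n) :
    toSpan (Pi.single i 1 : (pow R n).obj) = single i := by
  ext
  exact one_smul R _

end FGFree

instance restrictedYoneda_obj_preservesFiniteProducts (M : ModuleCat.{u} R) :
    PreservesFiniteProducts ((restrictedYoneda R).obj M) :=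
  have := preservesFiniteProducts_op (ObjectProperty.ι (IsFGFree R))
  inferInstanceAs (PreservesFiniteProducts ((ObjectProperty.ι (IsFGFree R)).op ⋙ yoneda.obj M))

theorem CategoryTheory.Limits.Types.existsUnique_of_isLimit_discrete {J : Type*}
    {K : Discrete J ⥤ Type u} {c : Cone K} (hc : IsLimit c) (a : ∀ j, K.obj ⟨j⟩) :
    ∃! x : c.pt, ∀ j, c.π.app ⟨j⟩ x = a j := by
  obtain ⟨x, hx, huniq⟩ := (Types.isLimit_iff c).1 ⟨hc⟩ (fun j => a j.as)
    (by rintro ⟨i⟩ ⟨j⟩ ⟨⟨rfl : i = j⟩⟩; simp)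
  exact ⟨x, fun j => hx ⟨j⟩, fun y hy => huniq y fun j => hy j.as⟩

namespace FGFreeModel

open FGFree

variable (G : (FGFree R)ᵒᵖ ⥤ Type u)

abbrev Carrier : Type u := G.obj (op (one R))

variable {G}

def el {N : FGFree R} (x : G.obj (op N)) (g : one R ⟶ N) : Carrier G := G.map g.op x

theorem el_map {N N' : FGFree R} (x : G.obj (op N)) (f : N' ⟶ N) (g : one R ⟶ N') :
    el (G.map f.op x) g = el x (g ≫ f) :=
  (Functor.map_comp_apply G f.op g.op x).symm

theorem el_el {N : FGFree R} (x : G.obj (op N)) (g : one R ⟶ N) (h : one R ⟶ one R) :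
    el (el x g) h = el x (h ≫ g) :=
  el_map x g h

theorem el_id (a : Carrier G) : el a (𝟙 (one R)) = a :=
  Functor.map_id_apply G _ a

instance : Neg (Carrier G) := ⟨fun a => el a (-𝟙 _)⟩

noncomputable instance : SMul R (Carrier G) := ⟨fun r a => el a (toSpan r)⟩

theorem neg_el {N : FGFree R} (x : G.obj (op N)) (g : one R ⟶ N) : -el x g = el x (-g) := by
  change el (el x g) (-𝟙 _) = _
  rw [el_el, Preadditive.neg_comp, Category.id_comp]

theorem smul_el {N : FGFree R} (r : R) (x : G.obj (op N)) (g : one R ⟶ N) :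
    r • el x g = el x (toSpan r ≫ g) :=
  el_el x g (toSpan r)

variable [PreservesFiniteProducts G]

theorem existsUnique_el_single {n : ℕ} (a : Fin n → Carrier G) :
    ∃! x : G.obj (op (pow R n)), ∀ i, el x (single i) = a i :=
  Types.existsUnique_of_isLimit_discrete
    (isLimitOfPreserves G (Cofan.IsColimit.op (isColimitPiCofan fun _ : Fin n => one R))) a

theorem exists_el_single {n : ℕ} (a : Fin n → Carrier G) :
    ∃ x : G.obj (op (pow R n)), ∀ i, el x (single i) = a i :=
  (existsUnique_el_single a).exists

noncomputable def tuple {n : ℕ} (a : Fin n → Carrier G) : G.obj (op (pow R n)) :=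
  (exists_el_single a).choose

theorem el_tuple_single {n : ℕ} (a : Fin n → Carrier G) (i : Fin n) :
    el (tuple a) (single i) = a i :=
  (exists_el_single a).choose_spec i

theorem tuple_el {n : ℕ} {N : FGFree R} (x : G.obj (op N)) (g : Fin n → (one R ⟶ N)) :
    tuple (fun i => el x (g i)) = G.map (desc g).op x :=
  (existsUnique_el_single _).unique (el_tuple_single _) fun i => by rw [el_map, single_desc]

theorem el_tuple_el {n : ℕ} {N : FGFree R} (x : G.obj (op N)) (g : Fin n → (one R ⟶ N))
    (h : one R ⟶ pow R n) : el (tuple fun i => el x (g i)) h = el x (h ≫ desc g) := by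
  rw [tuple_el, el_map]

noncomputable instance : Zero (Carrier G) := ⟨el (tuple (G := G) Fin.elim0) 0⟩

noncomputable instance : Add (Carrier G) :=
  ⟨fun a b => el (tuple ![a, b]) (single 0 + single 1)⟩

theorem el_zero {N : FGFree R} (x : G.obj (op N)) : el x 0 = 0 := by
  have : (Fin.elim0 : Fin 0 → Carrier G) = fun i => el x i.elim0 := funext fun i => i.elim0
  change _ = el (tuple Fin.elim0) 0
  rw [this, el_tuple_el, zero_comp]

theorem el_add {N : FGFree R} (x : G.obj (op N)) (g g' : one R ⟶ N) :
    el x g + el x g' = el x (g + g') := by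
  have : ![el x g, el x g'] = fun i => el x (![g, g'] i) := by
    funext i; fin_cases i <;> rfl
  change el (tuple ![el x g, el x g']) _ = _
  rw [this, el_tuple_el, Preadditive.add_comp, single_desc, single_desc]
  rfl

noncomputable instance : AddCommGroup (Carrier G) where
  nsmul := nsmulRec
  zsmul := zsmulRec
  add_assoc a b c := by
    obtain ⟨x, hx⟩ := exists_el_single ![a, b, c]
    obtain ⟨rfl, rfl, rfl⟩ : _ = a ∧ _ = b ∧ _ = c := ⟨hx 0, hx 1, hx 2⟩
    simp only [el_add, add_assoc]
  add_comm a b := by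
    obtain ⟨x, hx⟩ := exists_el_single ![a, b]
    obtain ⟨rfl, rfl⟩ : _ = a ∧ _ = b := ⟨hx 0, hx 1⟩
    rw [el_add, el_add, add_comm]
  zero_add a := by rw [← el_id a, ← el_zero a, el_add, zero_add]
  add_zero a := by rw [← el_id a, ← el_zero a, el_add, add_zero]
  neg_add_cancel a := by rw [← el_id a, neg_el, el_add, neg_add_cancel, el_zero]

noncomputable instance : Module R (Carrier G) where
  one_smul a := by
    change el a (toSpan 1) = a
    rw [toSpan_one, el_id]
  mul_smul r s a := by
    change el a (toSpan (r * s)) = el (el a (toSpan s)) (toSpan r)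
    rw [el_el, toSpan_comp]
    rfl
  smul_zero r := by
    conv_lhs => rw [← el_zero (0 : Carrier G)]
    rw [smul_el, comp_zero, el_zero]
  smul_add r a b := by
    obtain ⟨x, hx⟩ := exists_el_single ![a, b]
    obtain ⟨rfl, rfl⟩ : _ = a ∧ _ = b := ⟨hx 0, hx 1⟩
    rw [el_add, smul_el, smul_el, smul_el, Preadditive.comp_add, el_add]
  add_smul r s a := by
    change el a (toSpan (r + s)) = el a (toSpan r) + el a (toSpan s)
    rw [el_add, toSpan_add]
  zero_smul a := by
    change el a (toSpan 0) = 0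
    rw [toSpan_zero, el_zero]

noncomputable def toLinearMap {N : FGFree R} (x : G.obj (op N)) : N.obj →ₗ[R] Carrier G where
  toFun v := el x (toSpan v)
  map_add' v w := by rw [toSpan_add, el_add]
  map_smul' r v := by
    rw [RingHom.id_apply, smul_el, toSpan_comp]
    rfl

theorem toLinearMap_single {n : ℕ} (x : G.obj (op (pow R n))) (i : Fin n) :
    toLinearMap x (Pi.single i 1) = el x (single i) :=
  congrArg (el x) (toSpan_single i)

variable (G) in
noncomputable def comparison : G ⟶ (restrictedYoneda R).obj (ModuleCat.of R (Carrier G)) where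
  app X := TypeCat.ofHom fun x => ModuleCat.ofHom (toLinearMap x)
  naturality X Y f := by
    ext x
    change ModuleCat.ofHom (toLinearMap (G.map f x)) = f.unop.hom ≫ ModuleCat.ofHom (toLinearMap x)
    ext v
    exact (el_map x f.unop (toSpan v)).trans (congrArg (el x) (toSpan_comp v f.unop))

theorem comparison_app_pow_bijective (n : ℕ) :
    Function.Bijective ((comparison G).app (op (pow R n))) := by
  refine ⟨fun x y hxy => (existsUnique_el_single _).unique (fun _ => rfl) fun i => ?_, fun h => ?_⟩
  · rw [← toLinearMap_single, ← toLinearMap_single]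
    exact congrArg (fun h : (pow R n).obj ⟶ ModuleCat.of R (Carrier G) => h.hom (Pi.single i 1))
      hxy.symm
  · change (pow R n).obj ⟶ ModuleCat.of R (Carrier G) at h
    refine ⟨tuple fun i => h.hom (Pi.single i 1), ?_⟩
    apply ModuleCat.hom_ext
    refine LinearMap.pi_ext' fun i => LinearMap.ext_ring ?_
    exact (toLinearMap_single _ i).trans (el_tuple_single _ i)

instance : IsIso (comparison G) := by
  have (X : (FGFree R)ᵒᵖ) : IsIso ((comparison G).app X) := by
    obtain ⟨n, ⟨e⟩⟩ := (unop X).property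
    refine (NatTrans.isIso_app_iff_of_iso _ (ObjectProperty.isoMk _ (Y := pow R n) e).op).1 ?_
    exact (isIso_iff_bijective _).2 (comparison_app_pow_bijective n)
  exact NatIso.isIso_of_isIso_app _

end FGFreeModel

section FullyFaithful

variable {M M' : ModuleCat.{u} R}

noncomputable def restrictedYonedaPreimageFun
    (η : (restrictedYoneda R).obj M ⟶ (restrictedYoneda R).obj M') (m : M) : M' :=
  (η.app (op (FGFree.one R)) (ModuleCat.toSpan m) : ModuleCat.of R R ⟶ M').hom (1 : R)

theorem restrictedYonedaPreimageFun_apply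
    (η : (restrictedYoneda R).obj M ⟶ (restrictedYoneda R).obj M') {N : FGFree R}
    (h : N.obj ⟶ M) (v : N.obj) :
    restrictedYonedaPreimageFun η (h.hom v) = (η.app (op N) h : N.obj ⟶ M').hom v := by
  rw [restrictedYonedaPreimageFun, ← ModuleCat.toSpan_comp]
  exact congr($(NatTrans.naturality_apply η (FGFree.toSpan v).op h).hom (1 : R)).trans
    (congrArg _ (one_smul R v))

noncomputable def restrictedYonedaPreimage
    (η : (restrictedYoneda R).obj M ⟶ (restrictedYoneda R).obj M') : M ⟶ M' :=
  ModuleCat.ofHom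
  { toFun := restrictedYonedaPreimageFun η
    map_add' m m' := by
      let e (i : Fin 2) : (FGFree.pow R 2).obj := Pi.single i 1
      let D : (FGFree.pow R 2).obj ⟶ M := ModuleCat.ofHom
        (LinearMap.lsum R _ ℕ ![LinearMap.toSpanSingleton R M m, LinearMap.toSpanSingleton R M m'])
      have hD (i : Fin 2) : D.hom (e i) = ![m, m'] i := by
        change LinearMap.lsum R _ ℕ _ (Pi.single i 1) = _
        rw [LinearMap.lsum_piSingle]
        fin_cases i <;> exact one_smul R _
      calc restrictedYonedaPreimageFun η (m + m')
          = restrictedYonedaPreimageFun η (D.hom (e 0 + e 1)) := by rw [map_add, hD, hD]; rfl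
        _ = restrictedYonedaPreimageFun η (D.hom (e 0))
            + restrictedYonedaPreimageFun η (D.hom (e 1)) := by
            rw [restrictedYonedaPreimageFun_apply, map_add, restrictedYonedaPreimageFun_apply,
              restrictedYonedaPreimageFun_apply]
        _ = _ := by rw [hD, hD]; rfl
    map_smul' r m := by
      change restrictedYonedaPreimageFun η ((ModuleCat.toSpan m).hom r) = _
      rw [restrictedYonedaPreimageFun_apply (N := FGFree.one R), RingHom.id_apply]
      exact (congrArg _ (mul_one r).symm).trans (map_smul _ r (1 : R)) }

theorem restrictedYoneda_map_preimage
    (η : (restrictedYoneda R).obj M ⟶ (restrictedYoneda R).obj M') :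
    (restrictedYoneda R).map (restrictedYonedaPreimage η) = η := by
  ext X : 2
  ext h
  change (unop X).obj ⟶ M at h
  change h ≫ restrictedYonedaPreimage η = (η.app X h : (unop X).obj ⟶ M')
  ext v
  exact restrictedYonedaPreimageFun_apply η h v

theorem restrictedYoneda_map_injective {f g : M ⟶ M'}
    (hfg : (restrictedYoneda R).map f = (restrictedYoneda R).map g) : f = g := by
  ext m
  have := congr(((($hfg).app (op (FGFree.one R)) (ModuleCat.toSpan m) :
    ModuleCat.of R R ⟶ M')).hom (1 : R))
  change f.hom ((1 : R) • m) = g.hom ((1 : R) • m) at this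
  rwa [one_smul] at this

end FullyFaithful

end

/-- `ModuleCat R` is equivalent to the category of models of the Lawvere theory of finitely
generated free `R`-modules: the restricted Yoneda functor is fully faithful, with essential
image exactly the finite-product-preserving functors `(FGFree R)ᵒᵖ ⥤ Type`. -/
theorem restrictedYoneda_fullyFaithful_essImage_models :
    (restrictedYoneda R).Full ∧ (restrictedYoneda R).Faithful ∧
      ∀ G : (FGFree R)ᵒᵖ ⥤ Type u,
        (restrictedYoneda R).essImage G ↔ PreservesFiniteProducts G := by
  refine ⟨⟨fun η => ⟨_, restrictedYoneda_map_preimage η⟩⟩, ⟨restrictedYoneda_map_injective⟩,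
    fun G => ⟨?_, fun _ => ?_⟩⟩
  · rintro ⟨M, ⟨e⟩⟩
    exact ⟨fun _ => preservesLimitsOfShape_of_natIso e⟩
  · exact ⟨_, ⟨(asIso (FGFreeModel.comparison G)).symm⟩⟩
end

section
/- Let C be a preadditive category with finite biproducts and let X be an object of C such that every object of C is isomorphic to a finite biproduct X^{⊕n} of copies of X (for some n : ℕ). Let R be the endomorphism ring of X, with underlying set Hom_C(X, X), addition the preadditive addition, and multiplication r * s := r ≫ s (composition in diagrammatic order). Then the functor C ⥤ ModuleCat R sending Y to Hom_C(X, Y), regarded as a left R-module via r • h := r ≫ h, is fully faithful, and its essential image is the full subcategory of finitely generated free R-modules (modules isomorphic to Fin n → R). In particular C is equivalent to the category of finitely generated free R-modules. -/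
/-!
Write `P = unop X` and `R = End X`. An isomorphism `Y ≅ P^{⊕n}` splits `𝟙 Y` as `∑ j, p j ≫ i j`
with `p j : Y ⟶ P` and `i j : P ⟶ Y`. Since every `R`-linear map `φ : Hom(P, Y) → Hom(P, Z)`
commutes with precomposition, `φ h = φ (∑ j, (h ≫ p j) ≫ i j) = h ≫ ∑ j, p j ≫ φ (i j)`, so `φ` is
postcomposition with a morphism (fullness), and a morphism out of `Y` is determined by its
composites with the `i j` (faithfulness). The functor is additive, so it sends `P^{⊕n}` to
`Hom(P, P)^n ≅ R^n`, which identifies the essential image.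
-/

open CategoryTheory CategoryTheory.Limits Opposite

universe v u

/-- The left action of `End X` (for `X : Cᵒᵖ`) on `unop X ⟶ Y` by `r • f = r.unop ≫ f`
(the instance `CategoryTheory.End.mulActionLeft` of the older Mathlib). -/
instance endMulActionLeftOld {C : Type u} [Category.{v} C] {X : Cᵒᵖ} {Y : C} :
    MulAction (End X) (unop X ⟶ Y) where
  smul r f := r.unop ≫ f
  one_smul := Category.id_comp
  mul_smul _ _ _ := Category.assoc _ _ _

/-- The `End X`-module structure on `unop X ⟶ Y` (the instance
`CategoryTheory.Preadditive.moduleEndLeft` of the older Mathlib). -/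
instance preadditiveModuleEndLeftOld {C : Type u} [Category.{v} C] [Preadditive C]
    {X : Cᵒᵖ} {Y : C} : Module (End X) (unop X ⟶ Y) where
  smul_add _ _ _ := Preadditive.comp_add _ _ _ _ _ _
  smul_zero _ := Limits.comp_zero
  add_smul _ _ _ := Preadditive.add_comp _ _ _ _ _ _
  zero_smul _ := Limits.zero_comp

/-- The functor `preadditiveCoyonedaObj` of the older Mathlib: for `X : Cᵒᵖ`, it sends `Y` to the
`End X`-module `unop X ⟶ Y`. -/
def preadditiveCoyonedaObjOld {C : Type u} [Category.{v} C] [Preadditive C] (X : Cᵒᵖ) :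
    C ⥤ ModuleCat.{v} (End X) where
  obj Y := ModuleCat.of _ (unop X ⟶ Y)
  map f := ModuleCat.ofHom
    { toFun := fun g => g ≫ f
      map_add' := fun _ _ => Preadditive.add_comp _ _ _ _ _ _
      map_smul' := fun _ _ => Category.assoc _ _ _ }

namespace CategoryTheory.Preadditive

section SplitIdentity

variable {C : Type u} [Category.{v} C] [Preadditive C] {P Y Z : C} {ι : Type*} [Fintype ι]
  {p : ι → (Y ⟶ P)} {i : ι → (P ⟶ Y)}

theorem hom_ext_of_sum_comp_eq_id (hpi : ∑ j, p j ≫ i j = 𝟙 Y) {f g : Y ⟶ Z}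
    (h : ∀ j, i j ≫ f = i j ≫ g) : f = g := by
  rw [← Category.id_comp f, ← Category.id_comp g, ← hpi]
  simp only [sum_comp, Category.assoc, h]

theorem apply_eq_comp_of_sum_comp_eq_id (hpi : ∑ j, p j ≫ i j = 𝟙 Y)
    (φ : (P ⟶ Y) →+ (P ⟶ Z)) (hφ : ∀ (m : P ⟶ P) (k : P ⟶ Y), φ (m ≫ k) = m ≫ φ k)
    (h : P ⟶ Y) : φ h = h ≫ ∑ j, p j ≫ φ (i j) :=
  calc φ h = φ (∑ j, (h ≫ p j) ≫ i j) := by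
        simp only [Category.assoc, ← comp_sum, hpi, Category.comp_id]
    _ = h ≫ ∑ j, p j ≫ φ (i j) := by
        simp only [map_sum, hφ]
        simp only [comp_sum, Category.assoc]

theorem sum_comp_eq_id_of_iso_biproduct {J : Type} [Fintype J] [HasBiproduct fun _ : J => P]
    (e : Y ≅ ⨁ fun _ : J => P) :
    ∑ j, (e.hom ≫ biproduct.π (fun _ : J => P) j) ≫ (biproduct.ι (fun _ : J => P) j ≫ e.inv) =
      𝟙 Y :=
  calc _ = e.hom ≫ (∑ j, biproduct.π (fun _ : J => P) j ≫ biproduct.ι (fun _ : J => P) j) ≫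
          e.inv := by simp only [comp_sum, sum_comp, Category.assoc]
    _ = 𝟙 Y := by rw [biproduct.total, Category.id_comp, Iso.hom_inv_id]

end SplitIdentity

end CategoryTheory.Preadditive

section Coyoneda

open CategoryTheory.Preadditive

variable {C : Type u} [Category.{v} C] [Preadditive C] {X : Cᵒᵖ}

instance preadditiveCoyonedaObjOld_additive : (preadditiveCoyonedaObjOld X).Additive where
  map_add := ModuleCat.hom_ext (LinearMap.ext fun _ => Preadditive.comp_add _ _ _ _ _ _)

theorem preadditiveCoyonedaObjOld_hom_apply_comp {Y Z : C}
    (φ : (preadditiveCoyonedaObjOld X).obj Y ⟶ (preadditiveCoyonedaObjOld X).obj Z)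
    (m : unop X ⟶ unop X) (k : unop X ⟶ Y) : φ.hom (m ≫ k) = m ≫ φ.hom k :=
  let r : End X := m.op
  map_smul φ.hom r k

def homSelfLinearEquivEnd (X : Cᵒᵖ) : (unop X ⟶ unop X) ≃ₗ[End X] End X where
  toFun f := f.op
  invFun r := r.unop
  left_inv _ := rfl
  right_inv _ := rfl
  map_add' _ _ := rfl
  map_smul' _ _ := rfl

variable [HasFiniteBiproducts C]

noncomputable def preadditiveCoyonedaObjOldBiproductIso (X : Cᵒᵖ) (n : ℕ) :
    (preadditiveCoyonedaObjOld X).obj (⨁ fun _ : Fin n => unop X) ≅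
      ModuleCat.of (End X) (Fin n → End X) :=
  (preadditiveCoyonedaObjOld X).mapBiproduct _ ≪≫ ModuleCat.biproductIsoPi _ ≪≫
    (LinearEquiv.piCongrRight fun _ => homSelfLinearEquivEnd X).toModuleIso

theorem preadditiveCoyonedaObjOld_full
    (hgen : ∀ Y : C, ∃ n : ℕ, Nonempty (Y ≅ ⨁ fun _ : Fin n => unop X)) :
    (preadditiveCoyonedaObjOld X).Full where
  map_surjective {Y Z} φ := by
    obtain ⟨n, ⟨e⟩⟩ := hgen Y
    have hpi := sum_comp_eq_id_of_iso_biproduct e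
    refine ⟨∑ j, (e.hom ≫ biproduct.π _ j) ≫ φ.hom (biproduct.ι (fun _ => unop X) j ≫ e.inv),
      ModuleCat.hom_ext (LinearMap.ext fun h => ?_)⟩
    exact (apply_eq_comp_of_sum_comp_eq_id hpi φ.hom.toAddMonoidHom
      (preadditiveCoyonedaObjOld_hom_apply_comp φ) h).symm

theorem preadditiveCoyonedaObjOld_faithful
    (hgen : ∀ Y : C, ∃ n : ℕ, Nonempty (Y ≅ ⨁ fun _ : Fin n => unop X)) :
    (preadditiveCoyonedaObjOld X).Faithful where
  map_injective {Y _ f g} hfg := by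
    obtain ⟨n, ⟨e⟩⟩ := hgen Y
    exact hom_ext_of_sum_comp_eq_id (sum_comp_eq_id_of_iso_biproduct e) fun j =>
      LinearMap.congr_fun (congrArg ModuleCat.Hom.hom hfg) _

theorem preadditiveCoyonedaObjOld_essImage_iff
    (hgen : ∀ Y : C, ∃ n : ℕ, Nonempty (Y ≅ ⨁ fun _ : Fin n => unop X))
    (M : ModuleCat.{v} (End X)) :
    (preadditiveCoyonedaObjOld X).essImage M ↔
      ∃ n : ℕ, Nonempty (M ≅ ModuleCat.of (End X) (Fin n → End X)) := by
  constructor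
  · rintro ⟨Y, ⟨i⟩⟩
    obtain ⟨n, ⟨e⟩⟩ := hgen Y
    exact ⟨n, ⟨i.symm ≪≫ (preadditiveCoyonedaObjOld X).mapIso e ≪≫
      preadditiveCoyonedaObjOldBiproductIso X n⟩⟩
  · rintro ⟨n, ⟨i⟩⟩
    exact ⟨_, ⟨preadditiveCoyonedaObjOldBiproductIso X n ≪≫ i.symm⟩⟩

end Coyoneda

/-- Let `C` be a preadditive category with finite biproducts, generated under finite biproducts
by a single object `unop X` (for `X : Cᵒᵖ`).  Let `R := End X` be the endomorphism ring of this
object, with underlying additive group `Hom_C(unop X, unop X)` and multiplication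
`r * s = r ≫ s` (composition in diagrammatic order, as recorded by the first conjunct below).
Then the hom-functor `Y ↦ Hom_C(unop X, Y)`, with left `R`-module structure `r • h = r ≫ h`
(second conjunct), is fully faithful, and its essential image is exactly the finitely generated
free `R`-modules; in particular `C` is equivalent to the category of finitely generated free
`R`-modules. -/
theorem preadditiveCoyoneda_fullyFaithful_essImage_fgFree
    (C : Type u) [Category.{v} C] [Preadditive C] [HasFiniteBiproducts C] (X : Cᵒᵖ)
    (hgen : ∀ Y : C, ∃ n : ℕ, Nonempty (Y ≅ ⨁ fun _ : Fin n => unop X)) :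
    (∀ r s : End X, (r * s).unop = r.unop ≫ s.unop) ∧
    (∀ (Y : C) (r : End X) (h : unop X ⟶ Y), r • h = r.unop ≫ h) ∧
    (preadditiveCoyonedaObjOld X).Full ∧ (preadditiveCoyonedaObjOld X).Faithful ∧
    ∀ M : ModuleCat.{v} (End X),
      (preadditiveCoyonedaObjOld X).essImage M ↔
        ∃ n : ℕ, Nonempty (M ≅ ModuleCat.of (End X) (Fin n → End X)) :=
  ⟨fun _ _ => rfl, fun _ _ _ => rfl, preadditiveCoyonedaObjOld_full hgen,
    preadditiveCoyonedaObjOld_faithful hgen, preadditiveCoyonedaObjOld_essImage_iff hgen⟩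
end

section
/- Let L be a small category with finite products equipped with a distinguished object 1 such that every object of L is isomorphic to a finite power 1^n (a Lawvere theory). Then the evaluation functor ev₁ : Mdl(L) ⥤ Type, F ↦ F(1), admits a left adjoint (the free-model functor, assigning to a set the free model generated by it). -/
/-
The free model on a set `X` is the filtered colimit, over the finite subsets `S ⊆ X`, of the
corepresentable functors `L(one^S, -)`. Corepresentables preserve products and filtered colimits
commute with finite products in `Type`, so this colimit is again a model. By Yoneda, a morphism
out of it into a model `M` is a compatible family of elements of `M(one^S) ≅ M(one)^S`, that is,
a single function `X → M(one)`.
-/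

open CategoryTheory CategoryTheory.Limits

universe u

/-- Evaluation of models at an object `one` of `L` (the forgetful/underlying-set functor). -/
def evalAtGenerator (L : Type u) [SmallCategory L] (one : L) : Mdl L ⥤ Type u :=
  ObjectProperty.ι _ ⋙ (evaluation L (Type u)).obj one

open Opposite

namespace CategoryTheory

section

variable {C : Type*} [Category C] {J : Type u} (M : C ⥤ Type u) (f : J → C) [HasProduct f]
  [PreservesLimit (Discrete.functor f) M]

noncomputable def Functor.mapPiEquiv : M.obj (∏ᶜ f) ≃ ∀ j, M.obj (f j) :=
  (PreservesProduct.iso M f ≪≫ Types.productIso _).toEquiv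

@[simp]
lemma Functor.mapPiEquiv_apply (a : M.obj (∏ᶜ f)) (j : J) :
    M.mapPiEquiv f a j = M.map (Pi.π f j) a := by
  simp [Functor.mapPiEquiv, piComparison_comp_π_apply]

@[simp]
lemma Functor.map_π_mapPiEquiv_symm (φ : ∀ j, M.obj (f j)) (j : J) :
    M.map (Pi.π f j) ((M.mapPiEquiv f).symm φ) = φ j := by
  rw [← Functor.mapPiEquiv_apply, Equiv.apply_symm_apply]

end

lemma preservesFiniteProducts_colimit {J K C : Type*} [Category J] [Category K] [Category C]
    [HasColimitsOfShape J C] [PreservesFiniteProducts (colim : (J ⥤ C) ⥤ C)]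
    (F : J ⥤ K ⥤ C) [∀ j, PreservesFiniteProducts (F.obj j)] :
    PreservesFiniteProducts (colimit F) := by
  have : PreservesFiniteProducts F.flip :=
    ⟨fun _ ↦ preservesLimitsOfShape_of_evaluation _ _ fun j ↦
      inferInstanceAs (PreservesLimitsOfShape _ (F.obj j))⟩
  exact ⟨fun _ ↦ preservesLimitsOfShape_of_natIso (colimitIsoFlipCompColim F).symm⟩

end CategoryTheory

namespace Lawvere

variable {L : Type u} [SmallCategory L] [HasFiniteProducts L] (one : L) (X : Type u)

-- These are reducible so that the rewrites below see `(freeModelDiagram one X).obj S` as the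
-- corepresentable functor of `∏ᶜ fun _ : S => one`.
noncomputable abbrev finsetPow : (Finset X)ᵒᵖ ⥤ L where
  obj S := ∏ᶜ fun _ : S.unop => one
  map h := Pi.map' (fun s ↦ ⟨s, leOfHom h.unop s.2⟩) fun _ ↦ 𝟙 one

noncomputable abbrev freeModelDiagram : Finset X ⥤ L ⥤ Type u :=
  (finsetPow one X).rightOp ⋙ coyoneda

noncomputable abbrev freeModel : L ⥤ Type u :=
  colimit (freeModelDiagram one X)

instance : PreservesFiniteProducts (freeModel one X) := by
  have (S : Finset X) : PreservesFiniteProducts ((freeModelDiagram one X).obj S) :=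
    inferInstanceAs (PreservesFiniteProducts (coyoneda.obj _))
  exact preservesFiniteProducts_colimit _

noncomputable def universalElement (S : Finset X) :
    (freeModel one X).obj ((finsetPow one X).obj (op S)) :=
  coyonedaEquiv (colimit.ι (freeModelDiagram one X) S)

lemma map_universalElement {S T : Finset X} (h : S ⟶ T) :
    (freeModel one X).map ((finsetPow one X).map h.op) (universalElement one X T) =
      universalElement one X S := by
  rw [universalElement, coyonedaEquiv_naturality]
  exact congr_arg coyonedaEquiv (colimit.w (freeModelDiagram one X) h)

noncomputable def generator (x : X) : (freeModel one X).obj one :=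
  (freeModel one X).map (Pi.π _ ⟨x, Finset.mem_singleton_self x⟩) (universalElement one X {x})

lemma map_π_universalElement (S : Finset X) (s : S) :
    (freeModel one X).map (Pi.π _ s) (universalElement one X S) = generator one X s := by
  have hs : {s.1} ⟶ S := homOfLE (Finset.singleton_subset_iff.2 s.2)
  rw [generator, ← map_universalElement one X hs, ← Functor.map_comp_apply]
  simp

variable {one X} {M : L ⥤ Type u} [PreservesFiniteProducts M]

lemma freeModel_hom_ext {f g : freeModel one X ⟶ M}
    (h : ∀ x, f.app one (generator one X x) = g.app one (generator one X x)) : f = g := by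
  refine colimit.hom_ext fun S ↦ coyonedaEquiv.injective ?_
  rw [coyonedaEquiv_comp, coyonedaEquiv_comp]
  refine (M.mapPiEquiv _).injective (funext fun s : S ↦ ?_)
  simp only [Functor.mapPiEquiv_apply, ← NatTrans.naturality_apply]
  rw [← universalElement, map_π_universalElement, h]

lemma map_finsetPow_map_mapPiEquiv_symm (φ : X → M.obj one) {S T : Finset X} (h : S ⟶ T) :
    M.map ((finsetPow one X).map h.op) ((M.mapPiEquiv _).symm fun t : T ↦ φ t) =
      (M.mapPiEquiv _).symm fun s : S ↦ φ s := by
  refine (M.mapPiEquiv _).injective (funext fun s ↦ ?_)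
  simp [← Functor.map_comp_apply]

noncomputable def freeModelCocone (φ : X → M.obj one) : Cocone (freeModelDiagram one X) where
  pt := M
  ι.app S := coyonedaEquiv.symm ((M.mapPiEquiv _).symm fun s ↦ φ s)
  ι.naturality S T h := by
    simp [← map_finsetPow_map_mapPiEquiv_symm φ h, coyonedaEquiv_symm_map]

noncomputable def freeModelLift (φ : X → M.obj one) : freeModel one X ⟶ M :=
  colimit.desc _ (freeModelCocone φ)

lemma ι_freeModelLift (φ : X → M.obj one) (S : Finset X) :
    colimit.ι _ S ≫ freeModelLift φ =
      coyonedaEquiv.symm ((M.mapPiEquiv _).symm fun s : S ↦ φ s) :=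
  colimit.ι_desc _ _

lemma freeModelLift_app_generator (φ : X → M.obj one) (x : X) :
    (freeModelLift φ).app one (generator one X x) = φ x := by
  rw [generator, NatTrans.naturality_apply, universalElement, ← coyonedaEquiv_comp,
    ι_freeModelLift, Equiv.apply_symm_apply, Functor.map_π_mapPiEquiv_symm]

noncomputable def freeModelHomEquiv : (freeModel one X ⟶ M) ≃ (X → M.obj one) where
  toFun f x := f.app one (generator one X x)
  invFun := freeModelLift
  left_inv _ := freeModel_hom_ext (freeModelLift_app_generator _)
  right_inv φ := funext (freeModelLift_app_generator φ)

end Lawvere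

open Lawvere in
theorem evalAtGenerator_isRightAdjoint_general
    (L : Type u) [SmallCategory L] [HasFiniteProducts L] (one : L) :
    (evalAtGenerator L one).IsRightAdjoint := by
  let e (X : Type u) (M : Mdl L) :
      (⟨freeModel one X, inferInstance⟩ ⟶ M) ≃ (X ⟶ (evalAtGenerator L one).obj M) :=
    have : PreservesFiniteProducts ((ObjectProperty.ι _).obj M) := M.property
    (ObjectProperty.fullyFaithfulι _).homEquiv.trans
      (freeModelHomEquiv.trans TypeCat.homEquiv.symm)
  exact ⟨_, ⟨Adjunction.adjunctionOfEquivLeft e fun _ _ _ _ _ ↦ rfl⟩⟩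

/-- For a Lawvere theory `L` (a category with finite products in which every object is a finite
power of a distinguished object `one`), the evaluation functor `ev₁ : Mdl L ⥤ Type`,
`F ↦ F(one)`, admits a left adjoint (the free-model functor). -/
theorem evalAtGenerator_isRightAdjoint
    (L : Type u) [SmallCategory L] [HasFiniteProducts L] (one : L)
    (hgen : ∀ Y : L, ∃ n : ℕ, Nonempty (Y ≅ ∏ᶜ fun _ : Fin n => one)) :
    (evalAtGenerator L one).IsRightAdjoint :=
  evalAtGenerator_isRightAdjoint_general L one
end
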